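/- Let d ≥ 1 and let f satisfy the Shannon inequalities for C*_{d+1}, split into two copies of C*_d by the last cube coordinate. Let b ∈ B_d, let a' ∈ A'_d be its matching partner (flip of the last coordinate), and let a ∈ A_d be a neighbor of b in the last-coordinate-0 subcube. Then f(X'_d ∪ {b}) − f((X'_d ∪ {b}) ∖ {a'}) ≥ f(X'_d ∪ {a,b}) − f((X'_d ∪ {a,b}) ∖ {a'}) + 1. (This is the strong-submodularity step: X'_d ∪ {b} and (X'_d ∪ {a,b}) ∖ {a'} both contain an edge, while their intersection (X'_d ∪ {b}) ∖ {a'} is independent.) -/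

import Mathlib

open Finset

/-- A finset of vertices is independent: it contains no edge of `G`. -/
def IsIndepSet {V : Type*} (G : SimpleGraph V) (A : Finset V) : Prop :=
  ∀ u ∈ A, ∀ v ∈ A, ¬ G.Adj u v

/-- `f` satisfies the Shannon inequalities for `G`: (a) normalization and
positivity, (b) monotonicity, (c) submodularity, (d) strong monotonicity,
(e) strong submodularity. -/
structure ShannonIneqs {V : Type*} [DecidableEq V] (G : SimpleGraph V)
    (f : Finset V → ℝ) : Prop where
  empty : f ∅ = 0
  nonneg : ∀ A, 0 ≤ f A
  mono : ∀ A B, A ⊆ B → f A ≤ f B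
  submod : ∀ A B, f (A ∩ B) + f (A ∪ B) ≤ f A + f B
  strongMono : ∀ A B, A ⊆ B → IsIndepSet G A → ¬ IsIndepSet G B → f A + 1 ≤ f B
  strongSubmod : ∀ A B, ¬ IsIndepSet G A → ¬ IsIndepSet G B → IsIndepSet G (A ∩ B) →
    1 + f (A ∩ B) + f (A ∪ B) ≤ f A + f B

/-- Vertices of the `d`-dimensional hypercube. -/
abbrev Cube (d : ℕ) := Fin d → Bool

/-- Hamming weight of a cube vertex. -/
def wt {d : ℕ} (v : Cube d) : ℕ := (univ.filter fun i => v i = true).card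

/-- Vertices of `C*_d`: cube vertices (`Sum.inl`) and pendant leaves
(`Sum.inr v = ℓ(v)`, the leaf attached to the cube vertex `v`). -/
abbrev VStar (d : ℕ) := Cube d ⊕ Cube d

/-- The graph `C*_d`: the `d`-dimensional hypercube (vertices of `{0,1}^d`,
edges between vectors differing in exactly one coordinate) together with a
pendant leaf attached to every cube vertex. -/
def CStar (d : ℕ) : SimpleGraph (VStar d) where
  Adj x y :=
    match x, y with
    | .inl u, .inl v => hammingDist u v = 1
    | .inl u, .inr v => u = v
    | .inr u, .inl v => u = v
    | .inr _, .inr _ => False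
  symm := by
    refine ⟨?_⟩
    rintro (u | u) (v | v) h
    · simpa [hammingDist_comm] using h
    · exact h.symm
    · exact h.symm
    · exact h
  loopless := by
    refine ⟨?_⟩
    rintro (u | u) h
    · simp at h
    · exact h

/-- Flip the last coordinate of a cube vertex (the matching `M`). -/
def flipLast {d : ℕ} (v : Cube (d + 1)) : Cube (d + 1) :=
  Function.update v (Fin.last d) (!v (Fin.last d))

/-- `A_d` inside `C*_{d+1}`: even-weight cube vertices with last coordinate 0. -/
def A0 (d : ℕ) : Finset (VStar (d + 1)) :=
  (univ.filter fun v : Cube (d + 1) => Even (wt v) ∧ v (Fin.last d) = false).map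
    ⟨Sum.inl, Sum.inl_injective⟩

/-- `B_d` inside `C*_{d+1}`: odd-weight cube vertices with last coordinate 0. -/
def B0 (d : ℕ) : Finset (VStar (d + 1)) :=
  (univ.filter fun v : Cube (d + 1) => ¬ Even (wt v) ∧ v (Fin.last d) = false).map
    ⟨Sum.inl, Sum.inl_injective⟩

/-- `A'_d` inside `C*_{d+1}`: even-weight cube vertices with last coordinate 1. -/
def A1 (d : ℕ) : Finset (VStar (d + 1)) :=
  (univ.filter fun v : Cube (d + 1) => Even (wt v) ∧ v (Fin.last d) = true).map
    ⟨Sum.inl, Sum.inl_injective⟩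

/-- `B'_d` inside `C*_{d+1}`: odd-weight cube vertices with last coordinate 1. -/
def B1 (d : ℕ) : Finset (VStar (d + 1)) :=
  (univ.filter fun v : Cube (d + 1) => ¬ Even (wt v) ∧ v (Fin.last d) = true).map
    ⟨Sum.inl, Sum.inl_injective⟩

/-- `X_d = A_d ∪ ℓ(B_d)` inside `C*_{d+1}` (last coordinate 0 part). -/
def X0 (d : ℕ) : Finset (VStar (d + 1)) :=
  A0 d ∪ (univ.filter fun v : Cube (d + 1) => ¬ Even (wt v) ∧ v (Fin.last d) = false).map
    ⟨Sum.inr, Sum.inr_injective⟩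

/-- `X'_d = A'_d ∪ ℓ(B'_d)` inside `C*_{d+1}` (last coordinate 1 part). -/
def X1 (d : ℕ) : Finset (VStar (d + 1)) :=
  A1 d ∪ (univ.filter fun v : Cube (d + 1) => ¬ Even (wt v) ∧ v (Fin.last d) = true).map
    ⟨Sum.inr, Sum.inr_injective⟩

section Aux
open Finset

lemma wt_parity {n : ℕ} (u v : Cube n) :
    (wt u + wt v) % 2 = hammingDist u v % 2 := by
  have h : ((wt u + wt v : ℕ) : ZMod 2) = ((hammingDist u v : ℕ) : ZMod 2) := by
    unfold wt hammingDist
    rw [Finset.card_filter, Finset.card_filter, Finset.card_filter]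
    push_cast
    rw [← Finset.sum_add_distrib]
    apply Finset.sum_congr rfl
    intro i _
    cases hu : u i <;> cases hv : v i <;> simp [hu, hv] <;> decide
  have := (ZMod.natCast_eq_natCast_iff' _ _ _).mp h
  simpa using this

lemma not_adj_even {n : ℕ} {u v : Cube n} (hu : Even (wt u)) (hv : Even (wt v)) :
    hammingDist u v ≠ 1 := by
  intro h
  have := wt_parity u v
  rw [h] at this
  have h1 : Even (wt u + wt v) := hu.add hv
  rw [Nat.even_iff] at h1
  omega
  
lemma flipLast_apply_last {d : ℕ} (v : Cube (d + 1)) :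
    flipLast v (Fin.last d) = !v (Fin.last d) := by
  simp [flipLast]

lemma flipLast_apply_ne {d : ℕ} (v : Cube (d + 1)) {i : Fin (d + 1)}
    (hi : i ≠ Fin.last d) : flipLast v i = v i := by
  simp [flipLast, Function.update_of_ne hi]

lemma wt_flipLast {d : ℕ} {v : Cube (d + 1)} (hv : v (Fin.last d) = false) :
    wt (flipLast v) = wt v + 1 := by
  unfold wt
  have : (univ.filter fun i => flipLast v i = true) =
      insert (Fin.last d) (univ.filter fun i => v i = true) := by
    ext i
    rcases eq_or_ne i (Fin.last d) with rfl | hi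
    · simp [flipLast_apply_last, hv]
    · simp [flipLast_apply_ne v hi, hi]
  rw [this, Finset.card_insert_of_notMem (by simp [hv])]

lemma hammingDist_flipLast {d : ℕ} (v : Cube (d + 1)) :
    hammingDist v (flipLast v) = 1 := by
  unfold hammingDist
  have : univ.filter (fun i => v i ≠ flipLast v i) = ({Fin.last d} : Finset (Fin (d+1))) := by
    ext i
    rcases eq_or_ne i (Fin.last d) with rfl | hi
    · simp [flipLast_apply_last]
    · simp [flipLast_apply_ne v hi, hi]
  show #(univ.filter fun i => v i ≠ flipLast v i) = 1
  rw [this]; simp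

lemma eq_flipLast {d : ℕ} {u v : Cube (d + 1)} (hu : u (Fin.last d) = false)
    (hv : v (Fin.last d) = true) (h : hammingDist u v = 1) : v = flipLast u := by
  have hmem : Fin.last d ∈ univ.filter (fun i => u i ≠ v i) := by
    simp [hu, hv]
  have hset : univ.filter (fun i => u i ≠ v i) = ({Fin.last d} : Finset (Fin (d+1))) := by
    apply Finset.eq_singleton_iff_unique_mem.mpr
    refine ⟨hmem, ?_⟩
    intro x hx
    by_contra hne
    have h2 : 2 ≤ hammingDist u v := by
      have : ({x, Fin.last d} : Finset (Fin (d+1))) ⊆ univ.filter (fun i => u i ≠ v i) :=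
        Finset.insert_subset hx (Finset.singleton_subset_iff.mpr hmem)
      calc 2 = #({x, Fin.last d} : Finset (Fin (d+1))) := by
              rw [Finset.card_insert_of_notMem (by simp [hne]), Finset.card_singleton]
        _ ≤ _ := Finset.card_le_card this
    omega
  funext i
  rcases eq_or_ne i (Fin.last d) with rfl | hi
  · simp [flipLast_apply_last, hu, hv]
  · have : i ∉ ({i | u i ≠ v i} : Finset (Fin (d+1))) := by
      rw [hset]; simp [hi]
    simp only [Finset.mem_filter, Finset.mem_univ, true_and, not_not] at this
    rw [flipLast_apply_ne u hi, this]

lemma mem_X1_inl {d : ℕ} {v : Cube (d + 1)} :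
    Sum.inl v ∈ X1 d ↔ Even (wt v) ∧ v (Fin.last d) = true := by
  simp [X1, A1]

lemma mem_X1_inr {d : ℕ} {v : Cube (d + 1)} :
    Sum.inr v ∈ X1 d ↔ ¬ Even (wt v) ∧ v (Fin.last d) = true := by
  simp [X1, A1]

end Aux

lemma cstar_adj_inl_inl {n : ℕ} {u v : Cube n} :
    (CStar n).Adj (Sum.inl u) (Sum.inl v) ↔ hammingDist u v = 1 := Iff.rfl

lemma cstar_adj_inl_inr {n : ℕ} {u v : Cube n} :
    (CStar n).Adj (Sum.inl u) (Sum.inr v) ↔ u = v := Iff.rfl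

lemma cstar_adj_inr_inl {n : ℕ} {u v : Cube n} :
    (CStar n).Adj (Sum.inr u) (Sum.inl v) ↔ u = v := Iff.rfl

lemma cstar_adj_inr_inr {n : ℕ} {u v : Cube n} :
    ¬ (CStar n).Adj (Sum.inr u) (Sum.inr v) := fun h => h

/-- Inequality (5) of the paper (the strong-submodularity step): for
`b ∈ B_d` with matching partner `a' = flipLast b ∈ A'_d` and `a ∈ A_d` a
neighbor of `b` in the bottom subcube,
`f(bX'_d) − f(bX'_d ∖ a') ≥ f(abX'_d) − f(abX'_d ∖ a') + 1`. -/
theorem split_strong_submod_step (d : ℕ) (hd : 1 ≤ d)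
    (f : Finset (VStar (d + 1)) → ℝ) (hf : ShannonIneqs (CStar (d + 1)) f)
    (b : Cube (d + 1)) (hb : ¬ Even (wt b)) (hbl : b (Fin.last d) = false)
    (a : Cube (d + 1)) (ha : Even (wt a)) (hal : a (Fin.last d) = false)
    (hab : hammingDist a b = 1) :
    f (insert (Sum.inl a) (insert (Sum.inl b) (X1 d))) -
        f ((insert (Sum.inl a) (insert (Sum.inl b) (X1 d))).erase
          (Sum.inl (flipLast b))) + 1 ≤
      f (insert (Sum.inl b) (X1 d)) -
        f ((insert (Sum.inl b) (X1 d)).erase (Sum.inl (flipLast b))) := by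
  set a' : VStar (d + 1) := Sum.inl (flipLast b) with ha'
  set A : Finset (VStar (d + 1)) := insert (Sum.inl b) (X1 d) with hA
  set B : Finset (VStar (d + 1)) := (insert (Sum.inl a) A).erase a' with hB
  have hwta' : Even (wt (flipLast b)) := by
    rw [wt_flipLast hbl]
    exact Nat.even_add_one.mpr hb
  have ha'last : flipLast b (Fin.last d) = true := by
    rw [flipLast_apply_last, hbl]; rfl
  have ha'X : a' ∈ X1 d := mem_X1_inl.mpr ⟨hwta', ha'last⟩
  have ha'A : a' ∈ A := Finset.mem_insert_of_mem ha'X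
  have hane : (Sum.inl a : VStar (d+1)) ≠ a' := by
    intro h
    rw [ha'] at h
    have : a = flipLast b := Sum.inl_injective h
    rw [this, ha'last] at hal
    simp at hal
  have hbne : (Sum.inl b : VStar (d+1)) ≠ a' := by
    intro h
    have : b = flipLast b := Sum.inl_injective h
    rw [this, ha'last] at hbl
    simp at hbl
  -- set identities
  have hInter : A ∩ B = A.erase a' := by
    ext x
    simp only [hB, Finset.mem_inter, Finset.mem_erase, Finset.mem_insert]
    tauto
  have hUnion : A ∪ B = insert (Sum.inl a) A := by
    ext x
    simp only [hB, Finset.mem_union, Finset.mem_erase, Finset.mem_insert]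
    constructor
    · tauto
    · rintro (rfl | hx)
      · exact Or.inr ⟨hane, Or.inl rfl⟩
      · exact Or.inl hx
  -- A is not independent
  have hAnotind : ¬ IsIndepSet (CStar (d+1)) A := by
    intro h
    exact h (Sum.inl b) (Finset.mem_insert_self _ _) a' ha'A
      (cstar_adj_inl_inl.mpr (hammingDist_flipLast b))
  -- B is not independent
  have hBnotind : ¬ IsIndepSet (CStar (d+1)) B := by
    intro h
    exact h (Sum.inl a) (Finset.mem_erase.mpr ⟨hane, Finset.mem_insert_self _ _⟩)
      (Sum.inl b)
      (Finset.mem_erase.mpr ⟨hbne, Finset.mem_insert_of_mem (Finset.mem_insert_self _ _)⟩)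
      (cstar_adj_inl_inl.mpr hab)
  -- A.erase a' is independent
  have hInd : IsIndepSet (CStar (d+1)) (A.erase a') := by
    intro u hu v hv hadj
    rw [Finset.mem_erase, hA, Finset.mem_insert] at hu hv
    obtain ⟨hu1, hu2⟩ := hu
    obtain ⟨hv1, hv2⟩ := hv
    match u, v with
    | Sum.inl u, Sum.inl v =>
      have hduv : hammingDist u v = 1 := cstar_adj_inl_inl.mp hadj
      rcases hu2 with hu2 | hu2 <;> rcases hv2 with hv2 | hv2
      · have : u = v := by
          rw [Sum.inl.injEq] at hu2 hv2; rw [hu2, hv2]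
        rw [this] at hduv; simp at hduv
      · rw [Sum.inl.injEq] at hu2; subst hu2
        obtain ⟨hve, hvl⟩ := mem_X1_inl.mp hv2
        have : v = flipLast u := eq_flipLast hbl hvl hduv
        exact hv1 (by rw [this])
      · rw [Sum.inl.injEq] at hv2; subst hv2
        obtain ⟨hue, hul⟩ := mem_X1_inl.mp hu2
        have : u = flipLast v := eq_flipLast hbl hul (by rwa [hammingDist_comm])
        exact hu1 (by rw [this])
      · obtain ⟨hue, _⟩ := mem_X1_inl.mp hu2
        obtain ⟨hve, _⟩ := mem_X1_inl.mp hv2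
        exact not_adj_even hue hve hduv
    | Sum.inl u, Sum.inr v =>
      have huv : u = v := cstar_adj_inl_inr.mp hadj
      subst huv
      rcases hv2 with hv2 | hv2
      · simp at hv2
      obtain ⟨hvo, hvl⟩ := mem_X1_inr.mp hv2
      rcases hu2 with hu2 | hu2
      · rw [Sum.inl.injEq] at hu2; subst hu2; rw [hvl] at hbl; simp at hbl
      · exact hvo (mem_X1_inl.mp hu2).1
    | Sum.inr u, Sum.inl v =>
      have huv : u = v := cstar_adj_inr_inl.mp hadj
      subst huv
      rcases hu2 with hu2 | hu2
      · simp at hu2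
      obtain ⟨huo, hul⟩ := mem_X1_inr.mp hu2
      rcases hv2 with hv2 | hv2
      · rw [Sum.inl.injEq] at hv2; subst hv2; rw [hul] at hbl; simp at hbl
      · exact huo (mem_X1_inl.mp hv2).1
    | Sum.inr u, Sum.inr v => exact cstar_adj_inr_inr hadj
  have key := hf.strongSubmod A B hAnotind hBnotind (hInter ▸ hInd)
  rw [hInter, hUnion] at key
  have h2 : insert (Sum.inl a) (insert (Sum.inl b) (X1 d)) = insert (Sum.inl a) A := rfl
  linarith
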